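/- arXiv:1809.06523 — 6 statements merged into one kernel-verified Lean document; each statement's English description precedes it below -/
import Mathlib

section
/- Let X be a finite set, let φ : 𝒫(X) → ℝ be any real-valued function, and define λ_A = ∑_{B : A ⊆ B ⊆ X} (−1)^{|A|+|B|+1} φ(B) for each A ⊆ X. Then for every vector x ∈ ℝ^{𝒫(X)} one has ∑_{A⊆X} ∑_{B⊆X} x_A x_B φ(A ∪ B) = −∑_{C⊆X} λ_C (∑_{A ⊆ C} x_A)². -/
/-!
Squaring `∑_{A ⊆ C} x_A` produces the products `x_A x_B` with `A ∪ B ⊆ C`, so the right-hand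
side is `-∑_{A,B} x_A x_B ∑_{C ⊇ A ∪ B} λ_C`. Up to sign, `λ` is the Möbius transform of `φ`
on the superset order, and since `∑_{D ⊆ C ⊆ B} (-1)^|C|` vanishes unless `B = D`,
Möbius inversion gives `∑_{C ⊇ D} λ_C = -φ(D)`.
-/

open Finset

namespace Finset

variable {α R : Type*} [DecidableEq α] [CommRing R]

theorem sum_Icc_neg_one_pow_card (D B : Finset α) :
    ∑ C ∈ Icc D B, (-1 : R) ^ #C = if D = B then (-1) ^ #D else 0 := by
  by_cases hDB : D ⊆ B
  · have hdisj : ∀ S ∈ (B \ D).powerset, Disjoint D S := fun S hS =>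
      disjoint_sdiff.mono_right (mem_powerset.mp hS)
    rw [Icc_eq_image_powerset hDB, sum_image fun S hS T hT h => by
      rw [← union_sdiff_cancel_left (hdisj S hS), h, union_sdiff_cancel_left (hdisj T hT)]]
    have hcard : ∀ S ∈ (B \ D).powerset, (-1 : R) ^ #(D ∪ S) = (-1) ^ #D * (-1) ^ #S :=
      fun S hS => by rw [card_union_of_disjoint (hdisj S hS), pow_add]
    have halt := congrArg (Int.cast : ℤ → R) (sum_powerset_neg_one_pow_card (x := B \ D))
    push_cast at halt
    rw [sum_congr rfl hcard, ← mul_sum, halt]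
    by_cases hBD : B ⊆ D
    · simp [subset_antisymm hDB hBD]
    · have hne : D ≠ B := fun h => hBD h.ge
      simp [sdiff_eq_empty_iff_subset, hBD, hne]
  · have hne : D ≠ B := fun h => hDB h.le
    simp [Icc_eq_empty hDB, hne]

theorem sum_superset_sum_superset_neg_one_pow_mul [Fintype α] (φ : Finset α → R) (D : Finset α) :
    ∑ C with D ⊆ C, ∑ B with C ⊆ B, (-1 : R) ^ (#C + #B) * φ B = φ D := by
  rw [sum_comm' (t' := {B | D ⊆ B}) (s' := fun B => Icc D B) fun C B => by
    simp only [mem_filter, mem_univ, true_and, mem_Icc]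
    exact ⟨fun h => ⟨⟨h.1, h.2⟩, h.1.trans h.2⟩, fun h => h.1⟩]
  have hinner : ∀ B, ∑ C ∈ Icc D B, (-1 : R) ^ (#C + #B) * φ B
      = if D = B then φ B else 0 := fun B => by
    simp_rw [pow_add, mul_assoc, ← sum_mul, sum_Icc_neg_one_pow_card]
    split_ifs with h
    · subst h; rw [← mul_assoc, ← pow_add, Even.neg_one_pow ⟨_, rfl⟩, one_mul]
    · rw [zero_mul]
  rw [sum_congr rfl fun B _ => hinner B, sum_ite_eq]
  simp

theorem sum_powerset_sq [Fintype α] {S : Type*} [CommSemiring S] (x : Finset α → S)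
    (C : Finset α) :
    (∑ A ∈ C.powerset, x A) ^ 2 = ∑ A, ∑ B, if A ∪ B ⊆ C then x A * x B else 0 := by
  simp_rw [sq, sum_mul_sum, union_subset_iff, ite_and, ← filter_subset_univ, sum_filter]
  refine sum_congr rfl fun A _ => ?_
  split_ifs <;> simp

end Finset

/-- For a finite set `X`, a function `φ : 𝒫(X) → ℝ`, and
`λ_A = ∑_{B : A ⊆ B} (-1)^{|A|+|B|+1} φ(B)`, for every `x ∈ ℝ^{𝒫(X)}` we have
`∑_A ∑_B x_A x_B φ(A ∪ B) = - ∑_C λ_C (∑_{A ⊆ C} x_A)²`. -/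
theorem stmt0 {X : Type*} [Fintype X] [DecidableEq X] (φ : Finset X → ℝ)
    (lam : Finset X → ℝ)
    (hlam : ∀ A : Finset X,
      lam A = ∑ B ∈ Finset.univ.filter (fun B => A ⊆ B),
        (-1 : ℝ) ^ (A.card + B.card + 1) * φ B)
    (x : Finset X → ℝ) :
    ∑ A : Finset X, ∑ B : Finset X, x A * x B * φ (A ∪ B)
      = - ∑ C : Finset X, lam C * (∑ A ∈ C.powerset, x A) ^ 2 := by
  have hinv : ∀ D, ∑ C with D ⊆ C, lam C = -φ D := fun D => by
    simp_rw [hlam, pow_succ, mul_neg_one, neg_mul, sum_neg_distrib,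
      sum_superset_sum_superset_neg_one_pow_mul]
  calc ∑ A, ∑ B, x A * x B * φ (A ∪ B)
      = -∑ A : Finset X, ∑ B : Finset X, ∑ C : Finset X,
          if A ∪ B ⊆ C then lam C * (x A * x B) else 0 := by
        rw [← sum_neg_distrib]
        refine sum_congr rfl fun A _ => ?_
        rw [← sum_neg_distrib]
        refine sum_congr rfl fun B _ => ?_
        rw [← sum_filter, ← sum_mul, hinv]
        ring
    _ = -∑ C, lam C * ∑ A : Finset X, ∑ B : Finset X, if A ∪ B ⊆ C then x A * x B else 0 := by
        simp only [mul_sum, mul_ite, mul_zero]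
        rw [sum_comm_cycle]
    _ = -∑ C, lam C * (∑ A ∈ C.powerset, x A) ^ 2 := by
        simp only [sum_powerset_sq]
end

section
/- Let X be a finite set and let δ : 𝒫(X) → ℝ satisfy δ(A) = 0 whenever |A| ≤ 1. Then δ is of negative type if and only if λ_A ≥ 0 for every A ⊆ X with A ≠ ∅ and A ≠ X. -/
/-!
Möbius inversion over supersets gives `δ S = -∑_{C ⊇ S} λ_C`, hence
`δ (A ∪ B) = -∑_{C ⊇ A, C ⊇ B} λ_C`, and the quadratic form diagonalises:
`∑_{A,B} x_A x_B δ(A ∪ B) = -∑_C λ_C y_C²` with `y_C = ∑_{A ⊆ C} x_A`.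
The constraints `x_∅ = 0` and `∑_A x_A = 0` say exactly `y_∅ = y_X = 0`, and `x ↦ y` is
invertible, so `y` may be taken to be the indicator of any single `A ≠ ∅, X`.
-/

open Finset

theorem Finset.sum_Icc_neg_one_pow_card_s1 {α R : Type*} [DecidableEq α] [Ring R]
    (s t : Finset α) :
    ∑ u ∈ Icc s t, (-1 : R) ^ #u = if s = t then (-1) ^ #s else 0 := by
  by_cases hst : s ⊆ t
  · have hinj : Set.InjOn (s ∪ ·) ((t \ s).powerset : Set (Finset α)) := by
      intro u hu v hv huv
      simp only [coe_powerset, Set.mem_preimage, Set.mem_powerset_iff, coe_subset,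
        subset_sdiff] at hu hv
      simpa [union_sdiff_cancel_left hu.2.symm, union_sdiff_cancel_left hv.2.symm]
        using congrArg (· \ s) huv
    have hcard : ∀ u ∈ (t \ s).powerset, (-1 : R) ^ #(s ∪ u) = (-1) ^ #s * (-1) ^ #u := by
      intro u hu
      rw [card_union_of_disjoint (subset_sdiff.1 (mem_powerset.1 hu)).2.symm, pow_add]
    have halt := congrArg (Int.cast : ℤ → R) (sum_powerset_neg_one_pow_card (x := t \ s))
    push_cast at halt
    have hempty : t \ s = ∅ ↔ s = t :=
      sdiff_eq_empty_iff_subset.trans ⟨hst.antisymm, fun h => h ▸ subset_rfl⟩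
    rw [Icc_eq_image_powerset hst, sum_image hinj, sum_congr rfl hcard, ← mul_sum, halt]
    simp only [hempty, mul_ite, mul_one, mul_zero]
  · rw [Icc_eq_empty (fun h => hst h), if_neg (fun h => hst h.le), sum_empty]

theorem Finset.sum_powerset_ite_subset_neg_one_pow {α R : Type*} [DecidableEq α] [Ring R]
    (A C : Finset α) :
    ∑ S ∈ C.powerset, (if A ⊆ S then (-1 : R) ^ (#A + #S) else 0) = if A = C then 1 else 0 := by
  have hIcc : C.powerset.filter (A ⊆ ·) = Icc A C := by
    ext S
    simp [and_comm]
  simp_rw [← sum_filter, hIcc, pow_add, ← mul_sum, sum_Icc_neg_one_pow_card_s1, mul_ite, mul_zero]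
  rcases neg_one_pow_eq_or R #A with h | h <;> simp [h]

section

variable {X : Type*} [Fintype X] [DecidableEq X]

def IsNegativeType (δ : Finset X → ℝ) : Prop :=
  ∀ x : Finset X → ℝ, x ∅ = 0 → (∑ A : Finset X, x A) = 0 →
    ∑ A : Finset X, ∑ B : Finset X, x A * x B * δ (A ∪ B) ≤ 0

/-- The coefficient `λ_A`. -/
def mobiusWeight (δ : Finset X → ℝ) (A : Finset X) : ℝ :=
  ∑ B ∈ Finset.univ.filter (fun B => A ⊆ B), (-1 : ℝ) ^ (A.card + B.card + 1) * δ B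

theorem sum_mobiusWeight_supersets (δ : Finset X → ℝ) (S : Finset X) :
    ∑ C ∈ univ.filter (S ⊆ ·), mobiusWeight δ C = -δ S := by
  have hswap : ∀ C B, (C ∈ univ.filter (S ⊆ ·) ∧ B ∈ univ.filter (C ⊆ ·)) ↔
      (C ∈ Icc S B ∧ B ∈ univ.filter (S ⊆ ·)) := by
    intro C B
    simp only [mem_filter, mem_univ, true_and, mem_Icc]
    exact ⟨fun h => ⟨h, h.1.trans h.2⟩, fun h => h.1⟩
  have hinner : ∀ B, ∑ C ∈ Icc S B, (-1 : ℝ) ^ (#C + #B + 1) * δ B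
      = (-1) ^ (#B + 1) * δ B * if S = B then (-1) ^ #S else 0 := by
    intro B
    rw [← sum_Icc_neg_one_pow_card_s1, mul_sum]
    exact sum_congr rfl fun C _ => by ring
  unfold mobiusWeight
  rw [sum_comm' hswap, sum_congr rfl fun B _ => hinner B]
  simp only [mul_ite, mul_zero, sum_ite_eq, mem_filter, mem_univ, subset_refl, and_self,
    if_true]
  rcases neg_one_pow_eq_or ℝ #S with h | h <;> rw [pow_succ, h] <;> ring

theorem sum_sum_mul_mul_union_eq_neg_sum_mobiusWeight (δ x : Finset X → ℝ) :
    ∑ A, ∑ B, x A * x B * δ (A ∪ B)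
      = -∑ C, mobiusWeight δ C * (∑ A ∈ C.powerset, x A) ^ 2 := by
  have hδ : ∀ A B, δ (A ∪ B) = -∑ C : Finset X,
      if A ⊆ C ∧ B ⊆ C then mobiusWeight δ C else 0 := by
    intro A B
    simp_rw [← union_subset_iff, ← sum_filter, sum_mobiusWeight_supersets, neg_neg]
  have hx : ∀ C, ∑ A ∈ C.powerset, x A = ∑ A : Finset X, if A ⊆ C then x A else 0 := by
    intro C
    rw [sum_ite, sum_const_zero, add_zero, filter_subset_univ]
  simp_rw [hδ, hx, sq, sum_mul_sum, mul_sum, mul_neg, sum_neg_distrib, neg_inj, mul_sum]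
  conv_rhs => rw [sum_comm]; enter [2, A]; rw [sum_comm]
  refine sum_congr rfl fun A _ => sum_congr rfl fun B _ => sum_congr rfl fun C _ => ?_
  split_ifs <;> simp_all
  ring

theorem mobiusWeight_nonneg_of_isNegativeType {δ : Finset X → ℝ} (hδ : IsNegativeType δ)
    {A : Finset X} (hA : A ≠ ∅) (hAX : A ≠ univ) : 0 ≤ mobiusWeight δ A := by
  -- `x` is the Möbius inverse of the indicator of `A`.
  set x : Finset X → ℝ := fun S => if A ⊆ S then (-1) ^ (#A + #S) else 0
  have hy : ∀ C, ∑ S ∈ C.powerset, x S = if A = C then 1 else 0 :=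
    sum_powerset_ite_subset_neg_one_pow A
  have hx₀ : x ∅ = 0 := if_neg fun h => hA (subset_empty.1 h)
  have hsum : ∑ S, x S = 0 := by
    rw [← powerset_univ, hy, if_neg hAX]
  have := hδ x hx₀ hsum
  simp_rw [sum_sum_mul_mul_union_eq_neg_sum_mobiusWeight, hy, ite_pow, one_pow,
    zero_pow two_ne_zero, mul_ite, mul_one, mul_zero, sum_ite_eq, mem_univ, if_true] at this
  linarith

theorem isNegativeType_of_mobiusWeight_nonneg {δ : Finset X → ℝ}
    (h : ∀ A : Finset X, A ≠ ∅ → A ≠ univ → 0 ≤ mobiusWeight δ A) : IsNegativeType δ := by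
  intro x hx₀ hsum
  rw [sum_sum_mul_mul_union_eq_neg_sum_mobiusWeight, neg_nonpos]
  refine sum_nonneg fun C _ => ?_
  by_cases hC₀ : C = ∅
  · simp [hC₀, hx₀]
  by_cases hCX : C = univ
  · simp [hCX, hsum]
  exact mul_nonneg (h C hC₀ hCX) (sq_nonneg _)

end

theorem stmt1_general {X : Type*} [Fintype X] [DecidableEq X] (δ : Finset X → ℝ) :
    (∀ x : Finset X → ℝ, x ∅ = 0 → (∑ A : Finset X, x A) = 0 →
        ∑ A : Finset X, ∑ B : Finset X, x A * x B * δ (A ∪ B) ≤ 0)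
      ↔ (∀ A : Finset X, A ≠ ∅ → A ≠ Finset.univ →
          0 ≤ ∑ B ∈ Finset.univ.filter (fun B => A ⊆ B),
            (-1 : ℝ) ^ (A.card + B.card + 1) * δ B) :=
  ⟨fun h _ => mobiusWeight_nonneg_of_isNegativeType h, isNegativeType_of_mobiusWeight_nonneg⟩

/-- Let `X` be finite and `δ : 𝒫(X) → ℝ` with `δ(A) = 0` whenever `|A| ≤ 1`.
Then `δ` is of negative type iff `λ_A ≥ 0` for every `A ≠ ∅, X`, where
`λ_A = ∑_{B : A ⊆ B} (-1)^{|A|+|B|+1} δ(B)`. -/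
theorem stmt1 {X : Type*} [Fintype X] [DecidableEq X] (δ : Finset X → ℝ)
    (hδ : ∀ A : Finset X, A.card ≤ 1 → δ A = 0) :
    (∀ x : Finset X → ℝ, x ∅ = 0 → (∑ A : Finset X, x A) = 0 →
        ∑ A : Finset X, ∑ B : Finset X, x A * x B * δ (A ∪ B) ≤ 0)
      ↔ (∀ A : Finset X, A ≠ ∅ → A ≠ Finset.univ →
          0 ≤ ∑ B ∈ Finset.univ.filter (fun B => A ⊆ B),
            (-1 : ℝ) ^ (A.card + B.card + 1) * δ B) :=
  stmt1_general δ
end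

section
/- Every finite L1-embeddable diversity is of negative type. -/
/-!
In every coordinate `i` of the embedding, `δ (A ∪ B)` contributes
`max (top A) (top B) - min (bot A) (bot B)`, where `top`/`bot` are the largest/smallest
coordinates over a set (`x ∅ = 0` makes the value on `∅` irrelevant). So it suffices that the
kernel `min (g a) (g b)` is positive semidefinite on zero-sum vectors; `max` then follows from
`max a b = -min (-a) (-b)`. For `min`, adding an element `a` with the smallest value `g a` raises
the quadratic form by `g a * ((x a + T) ^ 2 - T ^ 2)`, where `T` is the previous total, so the
form always dominates `m * (∑ x) ^ 2` for any lower bound `m` of `g`.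
-/

open Finset

section MinKernel

variable {ι : Type*}

theorem mul_sq_sum_le_sum_sum_mul_min [DecidableEq ι] (g x : ι → ℝ) (s : Finset ι) {m : ℝ}
    (hm : ∀ b ∈ s, m ≤ g b) :
    m * (∑ a ∈ s, x a) ^ 2 ≤ ∑ a ∈ s, ∑ b ∈ s, x a * x b * min (g a) (g b) := by
  induction s using Finset.induction_on_min_value g generalizing m with
  | empty => simp
  | insert a s ha hmin ih =>
    have hrow : ∑ b ∈ s, x a * x b * min (g a) (g b) = x a * g a * ∑ b ∈ s, x b := by
      rw [mul_sum]
      exact sum_congr rfl fun b hb => by rw [min_eq_left (hmin b hb)]; ring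
    have hcol : ∑ b ∈ s, x b * x a * min (g b) (g a) = x a * g a * ∑ b ∈ s, x b := by
      rw [mul_sum]
      exact sum_congr rfl fun b hb => by rw [min_eq_right (hmin b hb)]; ring
    have hma : m ≤ g a := hm a (mem_insert_self a s)
    simp only [sum_insert ha, sum_add_distrib, hrow, hcol, min_self]
    linarith [mul_le_mul_of_nonneg_right hma (sq_nonneg (x a + ∑ b ∈ s, x b)), ih hmin]

theorem sum_sum_mul_min_nonneg (g x : ι → ℝ) (s : Finset ι) (hx : ∑ a ∈ s, x a = 0) :
    0 ≤ ∑ a ∈ s, ∑ b ∈ s, x a * x b * min (g a) (g b) := by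
  classical
  obtain ⟨m, hm⟩ := (s.image g).bddBelow
  simpa [hx] using
    mul_sq_sum_le_sum_sum_mul_min g x s (m := m) fun b hb => hm (mem_image_of_mem g hb)

theorem sum_sum_mul_max_nonpos (g x : ι → ℝ) (s : Finset ι) (hx : ∑ a ∈ s, x a = 0) :
    ∑ a ∈ s, ∑ b ∈ s, x a * x b * max (g a) (g b) ≤ 0 := by
  have := sum_sum_mul_min_nonneg (-g) x s hx
  simp only [Pi.neg_apply, min_neg_neg, mul_neg, sum_neg_distrib] at this
  linarith

theorem sum_sum_mul_max_sub_min_nonpos (f g x : ι → ℝ) (s : Finset ι)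
    (hx : ∑ a ∈ s, x a = 0) :
    ∑ a ∈ s, ∑ b ∈ s, x a * x b * (max (f a) (f b) - min (g a) (g b)) ≤ 0 := by
  simp only [mul_sub, sum_sub_distrib]
  linarith [sum_sum_mul_max_nonpos f x s hx, sum_sum_mul_min_nonneg g x s hx]

end MinKernel

theorem stmt6_general {X : Type*} [Fintype X] [DecidableEq X] (δ : Finset X → ℝ)
    (hL1 : ∃ (m : ℕ) (φ : X → Fin m → ℝ), ∀ (A : Finset X) (hA : A.Nonempty),
      δ A = ∑ i : Fin m,
        (A.sup' hA (fun a => φ a i) - A.inf' hA (fun a => φ a i))) :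
    ∀ x : Finset X → ℝ, x ∅ = 0 → (∑ A : Finset X, x A) = 0 →
      ∑ A : Finset X, ∑ B : Finset X, x A * x B * δ (A ∪ B) ≤ 0 := by
  intro x hx0 hx
  obtain ⟨m, φ, hφ⟩ := hL1
  let top (i : Fin m) (A : Finset X) : ℝ := if h : A.Nonempty then A.sup' h (φ · i) else 0
  let bot (i : Fin m) (A : Finset X) : ℝ := if h : A.Nonempty then A.inf' h (φ · i) else 0
  have hterm (A B : Finset X) : x A * x B * δ (A ∪ B) =
      ∑ i, x A * x B * (max (top i A) (top i B) - min (bot i A) (bot i B)) := by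
    rcases A.eq_empty_or_nonempty with rfl | hA
    · simp [hx0]
    rcases B.eq_empty_or_nonempty with rfl | hB
    · simp [hx0]
    rw [← mul_sum, hφ _ (hA.mono subset_union_left)]
    simp only [sup'_union hA hB, inf'_union hA hB, top, bot, dif_pos hA, dif_pos hB]
  simp_rw [hterm]
  rw [sum_congr rfl fun A _ => sum_comm, sum_comm]
  exact sum_nonpos fun i _ => sum_sum_mul_max_sub_min_nonpos (top i) (bot i) x univ hx

/-- Every finite `L₁`-embeddable diversity is of negative type. -/
theorem stmt6 {X : Type*} [Fintype X] [DecidableEq X] (δ : Finset X → ℝ)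
    (h1 : ∀ A : Finset X, 0 ≤ δ A)
    (h2 : ∀ A : Finset X, δ A = 0 ↔ A.card ≤ 1)
    (h3 : ∀ A B C : Finset X, B.Nonempty → δ (A ∪ C) ≤ δ (A ∪ B) + δ (B ∪ C))
    (hL1 : ∃ (m : ℕ) (φ : X → Fin m → ℝ), ∀ (A : Finset X) (hA : A.Nonempty),
      δ A = ∑ i : Fin m,
        (A.sup' hA (fun a => φ a i) - A.inf' hA (fun a => φ a i))) :
    ∀ x : Finset X → ℝ, x ∅ = 0 → (∑ A : Finset X, x A) = 0 →
      ∑ A : Finset X, ∑ B : Finset X, x A * x B * δ (A ∪ B) ≤ 0 :=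
  stmt6_general δ hL1
end

section
/- Let (X, δ) be a finite diversity and define D on pairs of nonempty subsets of X by D(A, B) = δ(A ∪ B) − ½δ(A) − ½δ(B). Then δ is of negative type if and only if D is of negative type as a symmetric function on 𝒫₀(X) × 𝒫₀(X), i.e. ∑_{A,B ∈ 𝒫₀(X)} x_A x_B D(A, B) ≤ 0 for every x ∈ ℝ^{𝒫₀(X)} with ∑_A x_A = 0. -/
/-!
On vectors of total mass zero the terms `-½δ(A) - ½δ(B)` of `D` contribute nothing to the
quadratic form, and a vector on `𝒫(X)` with `x ∅ = 0` is the same thing as its restriction to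
`𝒫₀(X)`, so the two quadratic forms are the same.
-/

open Finset

theorem Fintype.sum_subtype_of_eq_zero {ι M : Type*} [Fintype ι] [AddCommMonoid M]
    (p : ι → Prop) [DecidablePred p] {f : ι → M} (hf : ∀ i, ¬p i → f i = 0) :
    ∑ i : Subtype p, f i = ∑ i, f i := by
  rw [← Fintype.sum_subtype_add_sum_subtype p f,
    Fintype.sum_eq_zero (fun i : {i // ¬p i} ↦ f i) (fun i ↦ hf i i.2), add_zero]

theorem Fintype.sum_sum_subtype_of_eq_zero {ι R : Type*} [Fintype ι] [Semiring R]
    (p : ι → Prop) [DecidablePred p] {x : ι → R} (hx : ∀ i, ¬p i → x i = 0)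
    (K : ι → ι → R) :
    ∑ i : Subtype p, ∑ j : Subtype p, x i * x j * K i j = ∑ i, ∑ j, x i * x j * K i j := by
  rw [Fintype.sum_subtype_of_eq_zero p (f := fun i ↦ ∑ j : Subtype p, x i * x j * K i j)
    fun i hi ↦ by simp [hx i hi]]
  exact Finset.sum_congr rfl fun i _ ↦
    Fintype.sum_subtype_of_eq_zero p (f := fun j ↦ x i * x j * K i j) fun j hj ↦ by simp [hx j hj]

theorem Finset.sum_sum_mul_mul_sub_sub {ι R : Type*} [CommRing R] (s : Finset ι)
    {y : ι → R} (hy : ∑ i ∈ s, y i = 0) (K : ι → ι → R) (φ ψ : ι → R) :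
    ∑ i ∈ s, ∑ j ∈ s, y i * y j * (K i j - φ i - ψ j)
      = ∑ i ∈ s, ∑ j ∈ s, y i * y j * K i j := by
  have expand : ∀ i j, y i * y j * (K i j - φ i - ψ j)
      = y i * y j * K i j - y i * φ i * y j - y i * (y j * ψ j) := fun i j ↦ by ring
  simp only [expand, Finset.sum_sub_distrib, ← Finset.sum_mul, ← Finset.mul_sum, hy,
    mul_zero, zero_mul, sub_zero]

theorem stmt10_general {X : Type*} [Fintype X] [DecidableEq X] (δ : Finset X → ℝ)
    (D : Finset X → Finset X → ℝ)
    (hD : ∀ A B : Finset X, D A B = δ (A ∪ B) - δ A / 2 - δ B / 2) :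
    (∀ x : Finset X → ℝ, x ∅ = 0 → (∑ A : Finset X, x A) = 0 →
        ∑ A : Finset X, ∑ B : Finset X, x A * x B * δ (A ∪ B) ≤ 0)
      ↔ (∀ x : {A : Finset X // A.Nonempty} → ℝ,
          (∑ A : {A : Finset X // A.Nonempty}, x A) = 0 →
          ∑ A : {A : Finset X // A.Nonempty}, ∑ B : {A : Finset X // A.Nonempty},
            x A * x B * D A.1 B.1 ≤ 0) := by
  have vanish_of_empty : ∀ x : Finset X → ℝ, x ∅ = 0 → ∀ A, ¬A.Nonempty → x A = 0 :=
    fun x hx A hA ↦ by rwa [not_nonempty_iff_eq_empty.1 hA]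
  have centred : ∀ y : {A : Finset X // A.Nonempty} → ℝ, ∑ A, y A = 0 →
      ∑ A, ∑ B, y A * y B * D A.1 B.1 = ∑ A, ∑ B, y A * y B * δ (A.1 ∪ B.1) := by
    intro y hy
    simp only [hD]
    exact Finset.sum_sum_mul_mul_sub_sub _ hy _ _ _
  constructor
  · intro hneg y hy
    set x := Function.extend Subtype.val y 0
    have hxy : ∀ A, x (Subtype.val A) = y A := Subtype.val_injective.extend_apply y 0
    have hx0 : x ∅ = 0 :=
      Function.extend_apply' _ _ _ fun ⟨A, hA⟩ ↦ A.2.ne_empty hA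
    have hx := vanish_of_empty x hx0
    have hsum : ∑ A, x A = 0 := by
      rwa [← Fintype.sum_subtype_of_eq_zero _ hx, Fintype.sum_congr _ _ hxy]
    rw [centred y hy]
    simpa only [← Fintype.sum_sum_subtype_of_eq_zero _ hx, hxy] using hneg x hx0 hsum
  · intro hneg x hx0 hsum
    have hx := vanish_of_empty x hx0
    have hquad := hneg (fun A ↦ x A) (by rwa [Fintype.sum_subtype_of_eq_zero _ hx])
    rwa [centred _ (by rwa [Fintype.sum_subtype_of_eq_zero _ hx]),
      Fintype.sum_sum_subtype_of_eq_zero _ hx fun A B ↦ δ (A ∪ B)] at hquad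

/-- For a finite diversity `(X, δ)` and
`D(A,B) = δ(A ∪ B) - ½δ(A) - ½δ(B)` on nonempty subsets, `δ` is of negative type iff
`D` is of negative type as a symmetric function on `𝒫₀(X) × 𝒫₀(X)`. -/
theorem stmt10 {X : Type*} [Fintype X] [DecidableEq X] (δ : Finset X → ℝ)
    (h1 : ∀ A : Finset X, 0 ≤ δ A)
    (h2 : ∀ A : Finset X, δ A = 0 ↔ A.card ≤ 1)
    (h3 : ∀ A B C : Finset X, B.Nonempty → δ (A ∪ C) ≤ δ (A ∪ B) + δ (B ∪ C))
    (D : Finset X → Finset X → ℝ)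
    (hD : ∀ A B : Finset X, D A B = δ (A ∪ B) - δ A / 2 - δ B / 2) :
    (∀ x : Finset X → ℝ, x ∅ = 0 → (∑ A : Finset X, x A) = 0 →
        ∑ A : Finset X, ∑ B : Finset X, x A * x B * δ (A ∪ B) ≤ 0)
      ↔ (∀ x : {A : Finset X // A.Nonempty} → ℝ,
          (∑ A : {A : Finset X // A.Nonempty}, x A) = 0 →
          ∑ A : {A : Finset X // A.Nonempty}, ∑ B : {A : Finset X // A.Nonempty},
            x A * x B * D A.1 B.1 ≤ 0) :=
  stmt10_general δ D hD
end

section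
/- Let (X, δ) be a finite diversity and define D on pairs of nonempty subsets of X by D(A, B) = δ(A ∪ B) − ½δ(A) − ½δ(B). Then δ is of negative type if and only if D is isometric to the square of a Euclidean metric, i.e. there exist m ∈ ℕ and a map φ : 𝒫₀(X) → ℝ^m such that D(A, B) = ‖φ(A) − φ(B)‖² for all nonempty A, B ⊆ X, where ‖·‖ is the Euclidean norm. -/
/-!
Negative type of `δ` says that the kernel `(A, B) ↦ δ (A ∪ B)` is conditionally negative definite
on nonempty subsets. On vectors of total mass zero the quadratic form does not see terms depending on
only one index, so the same holds for `D`, which is symmetric with zero diagonal. For such a kernel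
`d` this is Schoenberg's criterion: `‖φ i - φ j‖ ^ 2` is conditionally negative definite by
expanding the square, and conversely, for a base point `o`, the Gromov product matrix
`(d i o + d j o - d i j) / 2` is positive semidefinite, so it is the Gram matrix of vectors `φ i`
with `‖φ i - φ j‖ ^ 2 = d i j`.
-/

open Finset

def IsCondNegDef {ι : Type*} [Fintype ι] (k : ι → ι → ℝ) : Prop :=
  ∀ y : ι → ℝ, ∑ i, y i = 0 → ∑ i, ∑ j, y i * y j * k i j ≤ 0

section CondNegDef

variable {ι : Type*} [Fintype ι]

theorem sum_sum_mul_mul_sub_sub_of_sum_eq_zero (k : ι → ι → ℝ) (a b : ι → ℝ) {y : ι → ℝ}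
    (hy : ∑ i, y i = 0) :
    ∑ i, ∑ j, y i * y j * (k i j - a i - b j) = ∑ i, ∑ j, y i * y j * k i j := by
  have hterm : ∀ i j, y i * y j * (k i j - a i - b j)
      = y i * y j * k i j - y i * a i * y j - y i * (y j * b j) := fun i j => by ring
  simp only [hterm, sum_sub_distrib, ← mul_sum, ← sum_mul, hy, mul_zero, zero_mul, sub_zero]

theorem isCondNegDef_sub_iff (k : ι → ι → ℝ) (a b : ι → ℝ) :
    IsCondNegDef (fun i j => k i j - a i - b j) ↔ IsCondNegDef k :=
  forall_congr' fun y => imp_congr_right fun hy => by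
    rw [sum_sum_mul_mul_sub_sub_of_sum_eq_zero k a b hy]

theorem isCondNegDef_subtype_iff {α : Type*} [Fintype α] (p : α → Prop) [DecidablePred p]
    (k : α → α → ℝ) :
    (∀ x : α → ℝ, (∀ a, ¬ p a → x a = 0) → ∑ a, x a = 0 → ∑ a, ∑ b, x a * x b * k a b ≤ 0) ↔
      IsCondNegDef (fun i j : Subtype p => k i j) := by
  have sum_eq {f : α → ℝ} (hf : ∀ a, ¬ p a → f a = 0) : ∑ a, f a = ∑ i : Subtype p, f i := by
    rw [← Fintype.sum_subtype_add_sum_subtype p f,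
      Fintype.sum_eq_zero _ fun i : {a // ¬ p a} => hf i i.2, add_zero]
  have quad_eq {x : α → ℝ} (hx : ∀ a, ¬ p a → x a = 0) :
      ∑ a, ∑ b, x a * x b * k a b = ∑ i : Subtype p, ∑ j : Subtype p, x i * x j * k i j := by
    rw [sum_eq fun a ha => by simp [hx a ha]]
    exact sum_congr rfl fun i _ => sum_eq fun b hb => by simp [hx b hb]
  constructor
  · intro h y hy
    set x : α → ℝ := fun a => if ha : p a then y ⟨a, ha⟩ else 0
    have hx : ∀ a, ¬ p a → x a = 0 := fun a ha => dif_neg ha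
    have hxy : ∀ i : Subtype p, x i = y i := fun i => dif_pos i.2
    simpa only [quad_eq hx, hxy] using h x hx (by simpa only [sum_eq hx, hxy] using hy)
  · intro h x hx hsum
    rw [quad_eq hx]
    exact h (fun i => x i) (by rwa [← sum_eq hx])

theorem sum_sum_mul_mul_inner_eq {E : Type*} [NormedAddCommGroup E] [InnerProductSpace ℝ E]
    (φ : ι → E) (y : ι → ℝ) :
    ∑ i, ∑ j, y i * y j * inner ℝ (φ i) (φ j) = ‖∑ i, y i • φ i‖ ^ 2 := by
  rw [← real_inner_self_eq_norm_sq, sum_inner]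
  refine sum_congr rfl fun i _ => ?_
  rw [inner_sum]
  refine sum_congr rfl fun j _ => ?_
  rw [real_inner_smul_left, real_inner_smul_right]
  ring

theorem isCondNegDef_norm_sub_sq {E : Type*} [NormedAddCommGroup E] [InnerProductSpace ℝ E]
    (φ : ι → E) : IsCondNegDef (fun i j => ‖φ i - φ j‖ ^ 2) := by
  intro y hy
  have hpolar : ∀ i j, ‖φ i - φ j‖ ^ 2
      = -2 * inner ℝ (φ i) (φ j) - (-‖φ i‖ ^ 2) - (-‖φ j‖ ^ 2) := fun i j => by
    rw [norm_sub_sq_real]; ring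
  simp only [hpolar]
  rw [sum_sum_mul_mul_sub_sub_of_sum_eq_zero (fun i j => -2 * inner ℝ (φ i) (φ j)) _ _ hy]
  have hscale : ∀ i j, y i * y j * (-2 * inner ℝ (φ i) (φ j))
      = -2 * (y i * y j * inner ℝ (φ i) (φ j)) := fun i j => by ring
  simp only [hscale, ← mul_sum, sum_sum_mul_mul_inner_eq]
  exact mul_nonpos_of_nonpos_of_nonneg (by norm_num) (sq_nonneg _)

end CondNegDef

open scoped ComplexOrder in
theorem Matrix.PosSemidef.exists_gram_eq {𝕜 n : Type*} [RCLike 𝕜] [Fintype n] [DecidableEq n]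
    {A : Matrix n n 𝕜} (hA : A.PosSemidef) :
    ∃ v : n → EuclideanSpace 𝕜 n, Matrix.gram 𝕜 v = A := by
  open scoped MatrixOrder in
  obtain ⟨B, rfl⟩ := CStarAlgebra.nonneg_iff_eq_star_mul_self.mp hA.nonneg
  refine ⟨fun i => WithLp.toLp 2 fun k => B k i, ?_⟩
  ext i j
  simp [Matrix.gram_apply, Matrix.mul_apply, PiLp.inner_apply, mul_comm]

section Schoenberg

variable {ι : Type*} [Fintype ι]

noncomputable def gromovProductMatrix (d : ι → ι → ℝ) (o : ι) : Matrix ι ι ℝ :=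
  Matrix.of fun i j => (d i o + d j o - d i j) / 2

theorem IsCondNegDef.posSemidef_gromovProductMatrix [DecidableEq ι] {d : ι → ι → ℝ}
    (hd : IsCondNegDef d) (hsymm : ∀ i j, d i j = d j i) (hdiag : ∀ i, d i i = 0) (o : ι) :
    (gromovProductMatrix d o).PosSemidef := by
  set G := gromovProductMatrix d o
  have hherm : G.IsHermitian := Matrix.IsHermitian.ext fun i j => by
    simp only [G, gromovProductMatrix, Matrix.of_apply, star_trivial, hsymm i j]; ring
  refine .of_dotProduct_mulVec_nonneg hherm fun y => ?_
  rw [star_trivial, ← Matrix.toLinearMap₂'_apply', Matrix.toLinearMap₂'_apply]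
  -- `z` has total mass zero and differs from `y` only at `o`, where the row and column of `G` vanish.
  set z : ι → ℝ := y - Pi.single o (∑ i, y i)
  have hz : ∑ i, z i = 0 := by simp [z, sum_sub_distrib]
  have hrow : ∀ j, G o j = 0 := fun j => by simp [G, gromovProductMatrix, hdiag, hsymm o j]
  have hcol : ∀ i, G i o = 0 := fun i => by simp [G, gromovProductMatrix, hdiag]
  have hyz : ∀ i j, y i * (y j * G i j) = z i * z j * G i j := fun i j => by
    by_cases hi : i = o
    · simp [hi, hrow]
    by_cases hj : j = o
    · simp [hj, hcol]
    simp only [z, Pi.sub_apply, Pi.single_apply, hi, hj, if_false, sub_zero]; ring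
  have hGd : ∀ i j, z i * z j * G i j = -(z i * z j * (d i j - d i o - d j o)) / 2 :=
    fun i j => by simp only [G, gromovProductMatrix, Matrix.of_apply]; ring
  simp only [smul_eq_mul, hyz, hGd, ← sum_div, sum_neg_distrib,
    sum_sum_mul_mul_sub_sub_of_sum_eq_zero d (d · o) (d · o) hz]
  linarith [hd z hz]

theorem isCondNegDef_iff_exists_euclidean {d : ι → ι → ℝ} (hsymm : ∀ i j, d i j = d j i)
    (hdiag : ∀ i, d i i = 0) :
    IsCondNegDef d ↔ ∃ (m : ℕ) (φ : ι → EuclideanSpace ℝ (Fin m)),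
      ∀ i j, d i j = ‖φ i - φ j‖ ^ 2 := by
  constructor
  · intro hd
    cases isEmpty_or_nonempty ι
    · exact ⟨0, fun _ => 0, fun i => isEmptyElim i⟩
    inhabit ι
    classical
    obtain ⟨v, hv⟩ := (hd.posSemidef_gromovProductMatrix hsymm hdiag default).exists_gram_eq
    have hinner : ∀ i j, inner ℝ (v i) (v j) = (d i default + d j default - d i j) / 2 :=
      fun i j => by rw [← Matrix.gram_apply, hv]; rfl
    let e := (stdOrthonormalBasis ℝ (EuclideanSpace ℝ ι)).repr
    refine ⟨_, fun i => e (v i), fun i j => ?_⟩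
    rw [← map_sub, LinearIsometryEquiv.norm_map, norm_sub_sq_real, ← real_inner_self_eq_norm_sq,
      ← real_inner_self_eq_norm_sq, hinner, hinner, hinner, hdiag, hdiag]
    ring
  · rintro ⟨m, φ, hφ⟩
    rw [show d = fun i j => ‖φ i - φ j‖ ^ 2 from funext₂ hφ]
    exact isCondNegDef_norm_sub_sq φ

end Schoenberg

theorem stmt11_general {X : Type*} [Fintype X] [DecidableEq X] (δ : Finset X → ℝ)
    (D : Finset X → Finset X → ℝ)
    (hD : ∀ A B : Finset X, D A B = δ (A ∪ B) - δ A / 2 - δ B / 2) :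
    (∀ x : Finset X → ℝ, x ∅ = 0 → (∑ A : Finset X, x A) = 0 →
        ∑ A : Finset X, ∑ B : Finset X, x A * x B * δ (A ∪ B) ≤ 0)
      ↔ (∃ (m : ℕ) (φ : {A : Finset X // A.Nonempty} → EuclideanSpace ℝ (Fin m)),
          ∀ A B : {A : Finset X // A.Nonempty}, D A.1 B.1 = ‖φ A - φ B‖ ^ 2) := by
  have hrestrict := isCondNegDef_subtype_iff (fun A : Finset X => A.Nonempty) (δ <| · ∪ ·)
  simp only [not_nonempty_iff_eq_empty, forall_eq] at hrestrict
  rw [hrestrict, ← isCondNegDef_sub_iff _ (δ ·.1 / 2) (δ ·.1 / 2)]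
  simp only [← hD]
  exact isCondNegDef_iff_exists_euclidean (fun A B => by rw [hD, hD, union_comm]; ring)
    fun A => by rw [hD, union_self]; ring

/-- For a finite diversity `(X, δ)` and
`D(A,B) = δ(A ∪ B) - ½δ(A) - ½δ(B)` on nonempty subsets, `δ` is of negative type iff
`D` is isometric to the square of a Euclidean metric. -/
theorem stmt11 {X : Type*} [Fintype X] [DecidableEq X] (δ : Finset X → ℝ)
    (h1 : ∀ A : Finset X, 0 ≤ δ A)
    (h2 : ∀ A : Finset X, δ A = 0 ↔ A.card ≤ 1)
    (h3 : ∀ A B C : Finset X, B.Nonempty → δ (A ∪ C) ≤ δ (A ∪ B) + δ (B ∪ C))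
    (D : Finset X → Finset X → ℝ)
    (hD : ∀ A B : Finset X, D A B = δ (A ∪ B) - δ A / 2 - δ B / 2) :
    (∀ x : Finset X → ℝ, x ∅ = 0 → (∑ A : Finset X, x A) = 0 →
        ∑ A : Finset X, ∑ B : Finset X, x A * x B * δ (A ∪ B) ≤ 0)
      ↔ (∃ (m : ℕ) (φ : {A : Finset X // A.Nonempty} → EuclideanSpace ℝ (Fin m)),
          ∀ A B : {A : Finset X // A.Nonempty}, D A.1 B.1 = ‖φ A - φ B‖ ^ 2) :=
  stmt11_general δ D hD
end

section
/- For m > 2 let 𝒳 be the collection of all m-element subsets of [2m] = {1, …, 2m} and define δ_H on subsets of 𝒳 by δ_H(𝒜) = |⋃_{A ∈ 𝒜} A| − m for nonempty 𝒜 and δ_H(∅) = 0. Then (𝒳, δ_H) is a diversity of negative type. -/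
open Finset

/-!
Write `S 𝒜` for the union of the members of `𝒜`. The triangle inequality is submodularity of
`|S ∪ U|` together with `|S ℬ| ≥ m`. For negative type, when `𝒜` is nonempty,
`δ (𝒜 ∪ ℬ) = (2m - m) - ⟨χ 𝒜, χ ℬ⟩`, where `χ 𝒜` is the indicator vector of the complement of
`S 𝒜`: the constant is killed by `∑ x = 0` and the Gram part contributes
`-∑ₐ (∑ 𝒜, x 𝒜 χ 𝒜 a)² ≤ 0`.
-/

theorem Finset.card_union_add_card_le_card_union_add_card_union {α : Type*} [DecidableEq α]
    (s t u : Finset α) : #(s ∪ u) + #t ≤ #(s ∪ t) + #(t ∪ u) := by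
  have h_union : #(s ∪ u) ≤ #((s ∪ t) ∪ (t ∪ u)) := card_le_card (by intro a; simp; tauto)
  have h_inter : #t ≤ #((s ∪ t) ∩ (t ∪ u)) := card_le_card (by intro a; simp; tauto)
  have := card_union_add_card_inter (s ∪ t) (t ∪ u)
  omega

theorem Finset.card_union_eq_card_sub_sum_mul {α : Type*} [Fintype α] [DecidableEq α]
    (s t : Finset α) :
    (#(s ∪ t) : ℝ) = Fintype.card α -
      ∑ a, (if a ∈ s then 0 else 1 : ℝ) * (if a ∈ t then 0 else 1) := by
  have h_mul : ∀ a, (if a ∈ s then 0 else 1 : ℝ) * (if a ∈ t then 0 else 1) =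
      if a ∈ (s ∪ t)ᶜ then 1 else 0 := by
    intro a
    by_cases a ∈ s <;> by_cases a ∈ t <;> simp_all
  simp only [h_mul, sum_boole, filter_mem_eq_inter, univ_inter, card_compl]
  rw [Nat.cast_sub (card_le_univ _)]
  ring

theorem sum_sum_mul_const_sub_sum_mul_nonpos {ι κ : Type*} (t : Finset ι) (u : Finset κ)
    (c : ℝ) (f : ι → κ → ℝ) (x : ι → ℝ) (hx : ∑ i ∈ t, x i = 0) :
    ∑ i ∈ t, ∑ j ∈ t, x i * x j * (c - ∑ a ∈ u, f i a * f j a) ≤ 0 := by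
  have h_expand : ∑ i ∈ t, ∑ j ∈ t, x i * x j * (c - ∑ a ∈ u, f i a * f j a) =
      c * (∑ i ∈ t, x i) ^ 2 - ∑ a ∈ u, (∑ i ∈ t, x i * f i a) ^ 2 := by
    simp only [sq, sum_mul, mul_sum, mul_sub, sum_sub_distrib]
    congr 1
    · exact sum_congr rfl fun _ _ => sum_congr rfl fun _ _ => by ring
    · rw [Finset.sum_comm]
      conv_rhs => rw [Finset.sum_comm]
      refine sum_congr rfl fun _ _ => ?_
      rw [Finset.sum_comm]
      exact sum_congr rfl fun _ _ => sum_congr rfl fun _ _ => by ring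
  rw [h_expand, hx, zero_pow two_ne_zero, mul_zero, zero_sub, neg_nonpos]
  exact sum_nonneg fun a _ => sq_nonneg _

section UnionDiversity

variable {ι α : Type*} [DecidableEq α] (s : ι → Finset α) (m : ℕ)

noncomputable def unionDiversity (𝒜 : Finset ι) : ℝ :=
  if 𝒜.Nonempty then #(𝒜.sup s) - m else 0

variable {s m}

theorem unionDiversity_of_nonempty {𝒜 : Finset ι} (h : 𝒜.Nonempty) :
    unionDiversity s m 𝒜 = #(𝒜.sup s) - m :=
  if_pos h

theorem le_card_sup_of_nonempty (hs : ∀ i, m ≤ #(s i)) {𝒜 : Finset ι} (h : 𝒜.Nonempty) :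
    m ≤ #(𝒜.sup s) :=
  let ⟨i, hi⟩ := h
  (hs i).trans (card_le_card (le_sup hi))

theorem unionDiversity_nonneg (hs : ∀ i, m ≤ #(s i)) (𝒜 : Finset ι) :
    0 ≤ unionDiversity s m 𝒜 := by
  rcases 𝒜.eq_empty_or_nonempty with rfl | h
  · simp [unionDiversity]
  · rw [unionDiversity_of_nonempty h, sub_nonneg]
    exact_mod_cast le_card_sup_of_nonempty hs h

theorem unionDiversity_eq_zero_iff (hs : ∀ i, #(s i) = m) (hinj : Function.Injective s)
    (𝒜 : Finset ι) : unionDiversity s m 𝒜 = 0 ↔ #𝒜 ≤ 1 := by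
  rcases 𝒜.eq_empty_or_nonempty with rfl | h
  · simp [unionDiversity]
  rw [unionDiversity_of_nonempty h, sub_eq_zero, Nat.cast_inj]
  constructor
  · intro h_card
    have h_eq : ∀ i ∈ 𝒜, s i = 𝒜.sup s := fun i hi =>
      eq_of_subset_of_card_le (le_sup hi) (by rw [h_card, hs])
    exact card_le_one.mpr fun i hi j hj => hinj ((h_eq i hi).trans (h_eq j hj).symm)
  · intro h_card
    obtain ⟨i, rfl⟩ := card_eq_one.mp (le_antisymm h_card h.card_pos)
    simp [hs]

theorem unionDiversity_union_le [DecidableEq ι] (hs : ∀ i, m ≤ #(s i)) (𝒜 ℬ 𝒞 : Finset ι)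
    (hℬ : ℬ.Nonempty) :
    unionDiversity s m (𝒜 ∪ 𝒞) ≤ unionDiversity s m (𝒜 ∪ ℬ) + unionDiversity s m (ℬ ∪ 𝒞) := by
  rcases (𝒜 ∪ 𝒞).eq_empty_or_nonempty with h | h
  · rw [h, unionDiversity, if_neg Finset.not_nonempty_empty]
    exact add_nonneg (unionDiversity_nonneg hs _) (unionDiversity_nonneg hs _)
  rw [unionDiversity_of_nonempty h, unionDiversity_of_nonempty (hℬ.mono subset_union_right),
    unionDiversity_of_nonempty (hℬ.mono subset_union_left), sup_union, sup_union, sup_union,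
    sup_eq_union, sup_eq_union, sup_eq_union]
  have h_card : #(𝒜.sup s ∪ 𝒞.sup s) + m ≤ #(𝒜.sup s ∪ ℬ.sup s) + #(ℬ.sup s ∪ 𝒞.sup s) :=
    (Nat.add_le_add_left (le_card_sup_of_nonempty hs hℬ) _).trans
      (card_union_add_card_le_card_union_add_card_union _ _ _)
  have h_card_real : (#(𝒜.sup s ∪ 𝒞.sup s) : ℝ) + m ≤
      #(𝒜.sup s ∪ ℬ.sup s) + #(ℬ.sup s ∪ 𝒞.sup s) := by
    exact_mod_cast h_card
  linarith

theorem sum_sum_mul_unionDiversity_union_nonpos [DecidableEq ι] [Fintype ι] [Fintype α]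
    (x : Finset ι → ℝ) (hx₀ : x ∅ = 0) (hx : ∑ 𝒜, x 𝒜 = 0) :
    ∑ 𝒜, ∑ ℬ, x 𝒜 * x ℬ * unionDiversity s m (𝒜 ∪ ℬ) ≤ 0 := by
  set f : Finset ι → α → ℝ := fun 𝒜 a => if a ∈ 𝒜.sup s then 0 else 1
  have h_term : ∀ 𝒜 ℬ, x 𝒜 * x ℬ * unionDiversity s m (𝒜 ∪ ℬ) =
      x 𝒜 * x ℬ * ((Fintype.card α - m) - ∑ a, f 𝒜 a * f ℬ a) := by
    intro 𝒜 ℬ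
    rcases 𝒜.eq_empty_or_nonempty with rfl | h
    · simp [hx₀]
    rw [unionDiversity_of_nonempty (h.mono subset_union_left), sup_union,
      sup_eq_union, card_union_eq_card_sub_sum_mul]
    ring
  simp only [h_term]
  exact sum_sum_mul_const_sub_sum_mul_nonpos _ _ _ f x hx

end UnionDiversity

theorem stmt17_general (m : ℕ)
    (δ : Finset {A : Finset (Fin (2 * m)) // A.card = m} → ℝ)
    (hδ : ∀ 𝒜 : Finset {A : Finset (Fin (2 * m)) // A.card = m},
      δ 𝒜 = if 𝒜.Nonempty then ((𝒜.sup (fun A => A.1)).card : ℝ) - m else 0) :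
    ((∀ 𝒜 : Finset {A : Finset (Fin (2 * m)) // A.card = m}, 0 ≤ δ 𝒜) ∧
     (∀ 𝒜 : Finset {A : Finset (Fin (2 * m)) // A.card = m}, δ 𝒜 = 0 ↔ 𝒜.card ≤ 1) ∧
     (∀ 𝒜 ℬ 𝒞 : Finset {A : Finset (Fin (2 * m)) // A.card = m}, ℬ.Nonempty →
        δ (𝒜 ∪ 𝒞) ≤ δ (𝒜 ∪ ℬ) + δ (ℬ ∪ 𝒞))) ∧
    (∀ x : Finset {A : Finset (Fin (2 * m)) // A.card = m} → ℝ, x ∅ = 0 →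
      (∑ 𝒜 : Finset {A : Finset (Fin (2 * m)) // A.card = m}, x 𝒜) = 0 →
      ∑ 𝒜 : Finset {A : Finset (Fin (2 * m)) // A.card = m},
        ∑ ℬ : Finset {A : Finset (Fin (2 * m)) // A.card = m},
          x 𝒜 * x ℬ * δ (𝒜 ∪ ℬ) ≤ 0) := by
  obtain rfl : δ = unionDiversity Subtype.val m := funext hδ
  have hs : ∀ A : {A : Finset (Fin (2 * m)) // A.card = m}, #A.1 = m := Subtype.prop
  exact ⟨⟨unionDiversity_nonneg (hs · |>.ge), unionDiversity_eq_zero_iff hs Subtype.val_injective,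
    unionDiversity_union_le (hs · |>.ge)⟩, sum_sum_mul_unionDiversity_union_nonpos⟩

/-- For `m > 2`, let `𝒳` be the collection of all `m`-element subsets
of `[2m]` and `δ_H(𝒜) = |⋃_{A ∈ 𝒜} A| − m` for nonempty `𝒜` (and `δ_H(∅) = 0`). Then
`(𝒳, δ_H)` is a diversity of negative type. -/
theorem stmt17 (m : ℕ) (hm : 2 < m)
    (δ : Finset {A : Finset (Fin (2 * m)) // A.card = m} → ℝ)
    (hδ : ∀ 𝒜 : Finset {A : Finset (Fin (2 * m)) // A.card = m},
      δ 𝒜 = if 𝒜.Nonempty then ((𝒜.sup (fun A => A.1)).card : ℝ) - m else 0) :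
    ((∀ 𝒜 : Finset {A : Finset (Fin (2 * m)) // A.card = m}, 0 ≤ δ 𝒜) ∧
     (∀ 𝒜 : Finset {A : Finset (Fin (2 * m)) // A.card = m}, δ 𝒜 = 0 ↔ 𝒜.card ≤ 1) ∧
     (∀ 𝒜 ℬ 𝒞 : Finset {A : Finset (Fin (2 * m)) // A.card = m}, ℬ.Nonempty →
        δ (𝒜 ∪ 𝒞) ≤ δ (𝒜 ∪ ℬ) + δ (ℬ ∪ 𝒞))) ∧
    (∀ x : Finset {A : Finset (Fin (2 * m)) // A.card = m} → ℝ, x ∅ = 0 →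
      (∑ 𝒜 : Finset {A : Finset (Fin (2 * m)) // A.card = m}, x 𝒜) = 0 →
      ∑ 𝒜 : Finset {A : Finset (Fin (2 * m)) // A.card = m},
        ∑ ℬ : Finset {A : Finset (Fin (2 * m)) // A.card = m},
          x 𝒜 * x ℬ * δ (𝒜 ∪ ℬ) ≤ 0) :=
  stmt17_general m δ hδ
end
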